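/- Let m ≥ 2 be an integer that is not prime, and let T = Tr(Z_m). Then the clique number of the commuting graph Γ(T) is m(m−1). In particular, the set of matrices of the form [[x+z, 0],[0,z]] with x ∈ Z_m \ {0} and z ∈ Z_m forms a clique of size m(m−1). -/

import Mathlib

open Matrix

/-- The ring of 2×2 upper triangular matrices over `R`. -/
def Tri (R : Type*) [CommRing R] : Subring (Matrix (Fin 2) (Fin 2) R) where
  carrier := {A | A 1 0 = 0}
  mul_mem' := by
    intro a b ha hb
    simp only [Set.mem_setOf_eq] at *
    simp [Matrix.mul_apply, Fin.sum_univ_two, ha, hb]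
  one_mem' := by simp [Matrix.one_apply]
  add_mem' := by
    intro a b ha hb
    simp_all [Matrix.add_apply]
  zero_mem' := by simp
  neg_mem' := by
    intro a ha
    simp_all

/-- The commuting graph of a ring `T`: vertices are the noncentral elements,
two distinct vertices are adjacent iff they commute. -/
def commGraph (T : Type*) [Ring T] : SimpleGraph {x : T // x ∉ Set.center T} where
  Adj a b := a ≠ b ∧ (a : T) * b = b * a
  symm := by
    constructor
    rintro a b ⟨h1, h2⟩
    exact ⟨h1.symm, h2.symm⟩
  loopless := by constructor; rintro a ⟨h, _⟩; exact h rfl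

/-!
Write an upper triangular matrix as `[[a, b], [0, c]]`. Two such matrices commute iff
`(a - c) * b' = (a' - c') * b`, so a commuting set is controlled by its set `W` of pairs
`(a - c, b)` together with the entries `c`. In a finite principal ideal ring `R` such a `W` has at
most `|R|` elements: if `P` is the set of first coordinates and `Ann P = (g)`, two pairs with the
same first coordinate differ by an element of `Ann P`, while `P` lies in the kernel of
multiplication by `g`, whose image is `Ann P`; hence `|W| ≤ |P| |Ann P| ≤ |R|`. So commuting sets
have at most `|R|²` elements. A clique together with the `|R|` scalar matrices is still commuting,
which bounds cliques by `|R|² - |R|`, and the non-scalar diagonal matrices attain this bound.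
-/

instance ZMod.isPrincipalIdealRing (m : ℕ) : IsPrincipalIdealRing (ZMod m) :=
  IsPrincipalIdealRing.of_surjective (Int.castRingHom (ZMod m)) ZMod.intCast_surjective

theorem card_mul_card_annihilator_span_le {R : Type*} [CommRing R] [IsPrincipalIdealRing R]
    [Finite R] (P : Set R) :
    Nat.card P * Nat.card (Ideal.span P).annihilator ≤ Nat.card R := by
  set A := (Ideal.span P).annihilator
  obtain ⟨g, hg⟩ := (IsPrincipalIdealRing.principal A).principal
  let f := AddMonoidHom.mulLeft g
  have hker : P ⊆ f.ker := fun p hp => by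
    have : g ∈ A := hg ▸ Ideal.mem_span_singleton_self g
    exact (Submodule.mem_annihilator_span P g).1 this ⟨p, hp⟩
  have hrange : (f.range : Set R) = A := by
    ext x
    simp [f, hg, Ideal.mem_span_singleton', mul_comm]
  calc Nat.card P * Nat.card A ≤ Nat.card f.ker * Nat.card f.range := by
        rw [← SetLike.coe_sort_coe f.range, hrange]
        exact Nat.mul_le_mul_right _ (Nat.card_mono (Set.toFinite _) hker)
    _ = Nat.card R := by rw [← AddSubgroup.index_ker, AddSubgroup.card_mul_index]

open Finset in
theorem card_le_of_forall_mul_eq_mul {R : Type*} [CommRing R] [IsPrincipalIdealRing R]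
    [Finite R] (W : Set (R × R)) (hW : ∀ v ∈ W, ∀ w ∈ W, v.1 * w.2 = w.1 * v.2) :
    Nat.card W ≤ Nat.card R := by
  classical
  obtain ⟨W, rfl⟩ := W.toFinite.exists_finset_coe
  set P := W.image Prod.fst
  set A := (Ideal.span (P : Set R)).annihilator
  have hfiber : ∀ d ∈ P, #(W.filter (·.1 = d)) ≤ Nat.card A := by
    intro d hd
    obtain ⟨w₀, hw₀, rfl⟩ := mem_image.1 hd
    rw [← Nat.card_eq_finsetCard]
    refine Nat.card_le_card_of_injective (fun w => ⟨w.1.2 - w₀.2, ?_⟩) ?_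
    · obtain ⟨hw, hw1⟩ := mem_filter.1 w.2
      rw [Submodule.mem_annihilator_span]
      rintro ⟨_, hv⟩
      obtain ⟨v, hvW, rfl⟩ := mem_image.1 (mem_coe.1 hv)
      simp only [smul_eq_mul]
      linear_combination hW v hvW w hw - hW v hvW w₀ hw₀ + v.2 * hw1
    · intro w w' h
      have h1 : w.1.1 = w'.1.1 := (mem_filter.1 w.2).2.trans (mem_filter.1 w'.2).2.symm
      exact Subtype.ext (Prod.ext h1 (sub_left_injective (congrArg Subtype.val h)))
  calc Nat.card (W : Set (R × R)) = #W := Nat.card_eq_finsetCard W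
    _ ≤ Nat.card A * #P := card_le_mul_card_image W _ hfiber
    _ = Nat.card (P : Set R) * Nat.card A := by rw [mul_comm, ← Nat.card_eq_finsetCard]; rfl
    _ ≤ Nat.card R := card_mul_card_annihilator_span_le _

namespace Tri

variable {R : Type*} [CommRing R]

def ofEntries (a b c : R) : Tri R := ⟨!![a, b; 0, c], rfl⟩

theorem eq_ofEntries (A : Tri R) :
    A = ofEntries ((A : Matrix (Fin 2) (Fin 2) R) 0 0) ((A : Matrix (Fin 2) (Fin 2) R) 0 1)
      ((A : Matrix (Fin 2) (Fin 2) R) 1 1) := by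
  ext i j
  fin_cases i <;> fin_cases j
  all_goals first | rfl | exact A.2

theorem ofEntries_inj {a b c a' b' c' : R} :
    ofEntries a b c = ofEntries a' b' c' ↔ a = a' ∧ b = b' ∧ c = c' := by
  simp [ofEntries, Subtype.ext_iff, and_assoc]

theorem ofEntries_mul_comm_iff (a b c x y z : R) :
    ofEntries a b c * ofEntries x y z = ofEntries x y z * ofEntries a b c ↔
      (a - c) * y = (x - z) * b := by
  simp only [Subtype.ext_iff, Subring.coe_mul, ofEntries, Matrix.mul_fin_two, ← Matrix.ext_iff,
    Fin.forall_fin_two, of_apply, cons_val', cons_val_zero, cons_val_one, cons_val_fin_one,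
    mul_zero, zero_add, add_zero, mul_comm, true_and, and_true]
  exact ⟨fun h => by linear_combination h, fun h => by linear_combination h⟩

theorem ofEntries_mem_center_iff (a b c : R) :
    ofEntries a b c ∈ Set.center (Tri R) ↔ a = c ∧ b = 0 := by
  rw [Semigroup.mem_center_iff]
  constructor
  · intro h
    have h₁ := (ofEntries_mul_comm_iff 0 1 0 a b c).1 (h _)
    have h₂ := (ofEntries_mul_comm_iff 1 0 0 a b c).1 (h _)
    exact ⟨by linear_combination -h₁, by linear_combination h₂⟩
  · rintro ⟨rfl, rfl⟩ B
    rw [eq_ofEntries B, ofEntries_mul_comm_iff]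
    ring

theorem card_center : Nat.card (Set.center (Tri R)) = Nat.card R := by
  refine (Nat.card_eq_of_bijective (fun r => ⟨ofEntries r 0 r, by simp [ofEntries_mem_center_iff]⟩)
    ⟨fun r s h => ?_, fun A => ?_⟩).symm
  · exact (ofEntries_inj.1 (congrArg Subtype.val h)).1
  · obtain ⟨A, hA⟩ := A
    have h := (ofEntries_mem_center_iff _ _ _).1 (eq_ofEntries A ▸ hA)
    exact ⟨_, Subtype.ext ((eq_ofEntries A).trans (by rw [h.1, h.2])).symm⟩

theorem card_le_of_pairwise_commute [IsPrincipalIdealRing R] [Finite R] (S : Set (Tri R))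
    (hS : ∀ A ∈ S, ∀ B ∈ S, A * B = B * A) : Nat.card S ≤ Nat.card R * Nat.card R := by
  let φ : Tri R → R × R := fun A =>
    ((A : Matrix (Fin 2) (Fin 2) R) 0 0 - (A : Matrix (Fin 2) (Fin 2) R) 1 1,
      (A : Matrix (Fin 2) (Fin 2) R) 0 1)
  have hφ : Nat.card (φ '' S) ≤ Nat.card R := by
    refine card_le_of_forall_mul_eq_mul _ ?_
    rintro _ ⟨A, hA, rfl⟩ _ ⟨B, hB, rfl⟩
    have h := hS A hA B hB
    rwa [eq_ofEntries A, eq_ofEntries B, ofEntries_mul_comm_iff] at h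
  calc Nat.card S ≤ Nat.card (φ '' S × R) := by
        refine Nat.card_le_card_of_injective
          (fun A => (⟨φ A, A, A.2, rfl⟩, (A : Matrix (Fin 2) (Fin 2) R) 1 1)) fun A B h => ?_
        simp only [Prod.ext_iff, Subtype.ext_iff, φ] at h
        obtain ⟨⟨h₀, h₁⟩, h₂⟩ := h
        rw [Subtype.ext_iff, eq_ofEntries A.1, eq_ofEntries B.1, ofEntries_inj]
        exact ⟨by linear_combination h₀ + h₂, h₁, h₂⟩
    _ ≤ Nat.card R * Nat.card R := by
        rw [Nat.card_prod]
        exact Nat.mul_le_mul_right _ hφ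

variable (R) in
def nonscalarDiagonal : Set (Tri R) :=
  {A | ∃ x z : R, x ≠ 0 ∧ (A : Matrix (Fin 2) (Fin 2) R) = !![x + z, 0; 0, z]}

theorem mem_nonscalarDiagonal {A : Tri R} :
    A ∈ nonscalarDiagonal R ↔ ∃ x z : R, x ≠ 0 ∧ A = ofEntries (x + z) 0 z := by
  simp only [nonscalarDiagonal, Set.mem_ofPred_eq, Subtype.ext_iff]
  rfl

theorem notMem_center_of_mem_nonscalarDiagonal {A : Tri R} (hA : A ∈ nonscalarDiagonal R) :
    A ∉ Set.center (Tri R) := by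
  obtain ⟨x, z, hx, rfl⟩ := mem_nonscalarDiagonal.1 hA
  rw [ofEntries_mem_center_iff]
  exact fun h => hx (by linear_combination h.1)

theorem mul_comm_of_mem_nonscalarDiagonal {A B : Tri R} (hA : A ∈ nonscalarDiagonal R)
    (hB : B ∈ nonscalarDiagonal R) : A * B = B * A := by
  obtain ⟨x, z, -, rfl⟩ := mem_nonscalarDiagonal.1 hA
  obtain ⟨x', z', -, rfl⟩ := mem_nonscalarDiagonal.1 hB
  rw [ofEntries_mul_comm_iff]
  ring

theorem card_nonscalarDiagonal [Finite R] :
    Nat.card (nonscalarDiagonal R) = Nat.card R * (Nat.card R - 1) := by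
  have hbij : Function.Bijective fun p : {x : R // x ≠ 0} × R =>
      (⟨ofEntries (p.1 + p.2) 0 p.2, mem_nonscalarDiagonal.2 ⟨p.1, p.2, p.1.2, rfl⟩⟩ :
        nonscalarDiagonal R) := by
    refine ⟨fun p q h => ?_, fun ⟨A, hA⟩ => ?_⟩
    · obtain ⟨h₀, -, h₁⟩ := ofEntries_inj.1 (congrArg Subtype.val h)
      exact Prod.ext (Subtype.ext (by linear_combination h₀ - h₁)) h₁
    · obtain ⟨x, z, hx, rfl⟩ := mem_nonscalarDiagonal.1 hA
      exact ⟨(⟨x, hx⟩, z), rfl⟩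
  have := Fintype.ofFinite R
  classical
  rw [← Nat.card_eq_of_bijective _ hbij, Nat.card_prod, mul_comm]
  simp [Nat.card_eq_fintype_card, Fintype.card_subtype_compl]

end Tri

section CommGraph

variable {T : Type*} [Ring T] [Finite T]

theorem cliqueNum_commGraph_add_card_center_le {n : ℕ}
    (h : ∀ S : Set T, (∀ A ∈ S, ∀ B ∈ S, A * B = B * A) → Nat.card S ≤ n) :
    (commGraph T).cliqueNum + Nat.card (Set.center T) ≤ n := by
  obtain ⟨s, hs⟩ := (commGraph T).exists_isNClique_cliqueNum
  let S : Set T := Subtype.val '' (s : Set {x : T // x ∉ Set.center T}) ∪ Set.center T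
  have hcomm : ∀ A ∈ S, ∀ B ∈ S, A * B = B * A := by
    rintro _ (⟨a, ha, rfl⟩ | hA) B hB
    · rcases hB with ⟨b, hb, rfl⟩ | hB
      · obtain rfl | hab := eq_or_ne a b
        · rfl
        · exact (hs.isClique ha hb hab).2
      · exact Semigroup.mem_center_iff.1 hB _
    · exact (Semigroup.mem_center_iff.1 hA B).symm
  have hdisj : Disjoint (Subtype.val '' (s : Set {x : T // x ∉ Set.center T})) (Set.center T) :=
    Set.disjoint_left.2 fun _ ⟨a, _, ha⟩ => ha ▸ a.2
  calc (commGraph T).cliqueNum + Nat.card (Set.center T) = Nat.card S := by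
        rw [Nat.card_coe_set_eq S, Set.ncard_union_eq hdisj, Set.ncard_image_of_injective _
          Subtype.val_injective, Set.ncard_coe_finset, hs.card_eq, Nat.card_coe_set_eq]
    _ ≤ n := h _ hcomm

theorem le_cliqueNum_commGraph (D : Set T) (hD : ∀ A ∈ D, A ∉ Set.center T)
    (hcomm : ∀ A ∈ D, ∀ B ∈ D, A * B = B * A) : Nat.card D ≤ (commGraph T).cliqueNum := by
  let D' : Set {x : T // x ∉ Set.center T} := {v | v.1 ∈ D}
  have hclique : (commGraph T).IsClique D' := fun a ha b hb hab => ⟨hab, hcomm _ ha _ hb⟩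
  calc Nat.card D = Nat.card D' :=
        (Nat.card_congr (Equiv.subtypeSubtypeEquivSubtype fun {A} hA => hD A hA)).symm
    _ = D'.toFinite.toFinset.card := Nat.card_eq_card_finite_toFinset _
    _ ≤ (commGraph T).cliqueNum :=
        SimpleGraph.IsClique.card_le_cliqueNum (tc := by rwa [Set.Finite.coe_toFinset])

end CommGraph

theorem cliqueNum_commGraph_tri_zmod_general (m : ℕ) (hm : 2 ≤ m) :
    (commGraph (Tri (ZMod m))).cliqueNum = m * (m - 1) ∧
    (Nat.card {A : Tri (ZMod m) | ∃ (x z : ZMod m), x ≠ 0 ∧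
        (A : Matrix (Fin 2) (Fin 2) (ZMod m)) = !![x + z, 0; 0, z]} = m * (m - 1) ∧
      (∀ A ∈ {A : Tri (ZMod m) | ∃ (x z : ZMod m), x ≠ 0 ∧
          (A : Matrix (Fin 2) (Fin 2) (ZMod m)) = !![x + z, 0; 0, z]},
        A ∉ Set.center (Tri (ZMod m))) ∧
      ∀ A ∈ {A : Tri (ZMod m) | ∃ (x z : ZMod m), x ≠ 0 ∧
          (A : Matrix (Fin 2) (Fin 2) (ZMod m)) = !![x + z, 0; 0, z]},
        ∀ B ∈ {A : Tri (ZMod m) | ∃ (x z : ZMod m), x ≠ 0 ∧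
          (A : Matrix (Fin 2) (Fin 2) (ZMod m)) = !![x + z, 0; 0, z]},
        A * B = B * A) := by
  have : NeZero m := ⟨by omega⟩
  have hcard : Nat.card (Tri.nonscalarDiagonal (ZMod m)) = m * (m - 1) := by
    rw [Tri.card_nonscalarDiagonal, Nat.card_zmod]
  refine ⟨le_antisymm ?_ ?_, hcard, fun A => Tri.notMem_center_of_mem_nonscalarDiagonal,
    fun A hA B hB => Tri.mul_comm_of_mem_nonscalarDiagonal hA hB⟩
  · have h := cliqueNum_commGraph_add_card_center_le (T := Tri (ZMod m))
      Tri.card_le_of_pairwise_commute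
    rw [Tri.card_center, Nat.card_zmod] at h
    rw [Nat.mul_sub_one]
    omega
  · exact hcard ▸ le_cliqueNum_commGraph _ (fun A => Tri.notMem_center_of_mem_nonscalarDiagonal)
      fun A hA B hB => Tri.mul_comm_of_mem_nonscalarDiagonal hA hB

/-- Theorem 2.10: if `m ≥ 2` is not prime, the clique number of the commuting
graph of `Tri (ZMod m)` is `m (m - 1)`; in particular the set of matrices
`[[x+z,0],[0,z]]` with `x ≠ 0` consists of noncentral, pairwise commuting
elements and has cardinality `m (m - 1)`. -/
theorem cliqueNum_commGraph_tri_zmod (m : ℕ) (hm : 2 ≤ m) (h : ¬ m.Prime) :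
    (commGraph (Tri (ZMod m))).cliqueNum = m * (m - 1) ∧
    (Nat.card {A : Tri (ZMod m) | ∃ (x z : ZMod m), x ≠ 0 ∧
        (A : Matrix (Fin 2) (Fin 2) (ZMod m)) = !![x + z, 0; 0, z]} = m * (m - 1) ∧
      (∀ A ∈ {A : Tri (ZMod m) | ∃ (x z : ZMod m), x ≠ 0 ∧
          (A : Matrix (Fin 2) (Fin 2) (ZMod m)) = !![x + z, 0; 0, z]},
        A ∉ Set.center (Tri (ZMod m))) ∧
      ∀ A ∈ {A : Tri (ZMod m) | ∃ (x z : ZMod m), x ≠ 0 ∧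
          (A : Matrix (Fin 2) (Fin 2) (ZMod m)) = !![x + z, 0; 0, z]},
        ∀ B ∈ {A : Tri (ZMod m) | ∃ (x z : ZMod m), x ≠ 0 ∧
          (A : Matrix (Fin 2) (Fin 2) (ZMod m)) = !![x + z, 0; 0, z]},
        A * B = B * A) :=
  cliqueNum_commGraph_tri_zmod_general m hm
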